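/- arXiv:2003.12403 — 5 statements merged into one kernel-verified Lean document; each statement's English description precedes it below -/
import Mathlib

section
/- Let (Ω,Σ,μ) be a measure space. Then the following are equivalent: (i) μ is semi-finite (every set of infinite measure contains a measurable subset of finite positive measure); (ii) for every measurable V : Ω → 𝕂 for which the multiplication operator V(m) on L²(μ) is bounded, V is essentially bounded and ‖V‖_{L∞(μ)} ≤ ‖V(m)‖. -/
open MeasureTheory ENNReal NNReal

/-!
If `μ` is semi-finite and `‖V(m)‖ ≤ C < t`, then every set `{t ≤ ‖V‖}` is null: testing `V(m)`
on the indicator of a subset `B` of finite positive measure would give `t ≤ C`.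
Conversely, if `A` has infinite measure but only null subsets of finite measure, then every
`f ∈ L²` vanishes a.e. on `A`, because `f` is supported on a σ-finite set; so
multiplication by `1_A` is the zero operator although `‖1_A‖_∞ = 1`.
-/

namespace MeasureTheory

variable {α : Type*} [MeasurableSpace α] {μ : Measure α}

def IsSemifinite (μ : Measure α) : Prop :=
  ∀ A : Set α, MeasurableSet A → μ A = ⊤ →
    ∃ B : Set α, MeasurableSet B ∧ B ⊆ A ∧ 0 < μ B ∧ μ B < ⊤

theorem isSemifinite_iff :
    IsSemifinite μ ↔ ∀ A : Set α, MeasurableSet A →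
      (∀ B ⊆ A, MeasurableSet B → μ B ≠ ⊤ → μ B = 0) → μ A = 0 := by
  constructor
  · intro hsf A hA hnull
    by_contra hA0
    by_cases hAtop : μ A = ⊤
    · obtain ⟨B, hB, hBA, hB0, hBtop⟩ := hsf A hA hAtop
      exact hB0.ne' (hnull B hBA hB hBtop.ne)
    · exact hA0 (hnull A subset_rfl hA hAtop)
  · intro h A hA hAtop
    by_contra! hno
    have hA0 : μ A = 0 := h A hA fun B hBA hB hBtop => by
      by_contra hB0
      exact hBtop (top_le_iff.1 (hno B hB hBA (pos_iff_ne_zero.2 hB0)))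
    simp [hA0] at hAtop

theorem measure_inter_eq_zero_of_sigmaFinite_restrict {A t : Set α} (hA : MeasurableSet A)
    (hnull : ∀ B ⊆ A, MeasurableSet B → μ B ≠ ⊤ → μ B = 0) (ht : MeasurableSet t)
    [SigmaFinite (μ.restrict t)] : μ (A ∩ t) = 0 := by
  rw [← Measure.restrict_apply hA]
  refine measure_mono_null (fun ω hω => ?_)
    (measure_iUnion_null fun n => (?_ : μ.restrict t (A ∩ spanningSets (μ.restrict t) n) = 0))
  · exact Set.mem_iUnion.2 ⟨_, hω, mem_spanningSetsIndex _ ω⟩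
  have hS := measurableSet_spanningSets (μ.restrict t) n
  rw [Measure.restrict_apply (hA.inter hS)]
  refine hnull _ (fun ω hω => hω.1.1) ((hA.inter hS).inter ht) ?_
  rw [← Measure.restrict_apply (hA.inter hS)]
  exact (measure_mono Set.inter_subset_right).trans_lt
    (measure_spanningSets_lt_top _ n) |>.ne

theorem MemLp.ae_eq_zero_on_of_forall_finite_null {E : Type*} [NormedAddCommGroup E]
    {p : ℝ≥0∞} {f : α → E} {A : Set α} (hf : MemLp f p μ) (hp0 : p ≠ 0) (hptop : p ≠ ⊤)
    (hA : MeasurableSet A) (hnull : ∀ B ⊆ A, MeasurableSet B → μ B ≠ ⊤ → μ B = 0) :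
    ∀ᵐ ω ∂μ, ω ∈ A → f ω = 0 := by
  have hfin := hf.aefinStronglyMeasurable hp0 hptop
  have ht := hfin.measurableSet
  have hAt : ∀ᵐ ω ∂μ, ω ∉ A ∩ hfin.sigmaFiniteSet := measure_eq_zero_iff_ae_notMem.1
    (measure_inter_eq_zero_of_sigmaFinite_restrict hA hnull ht)
  have hft : ∀ᵐ ω ∂μ, ω ∈ hfin.sigmaFiniteSetᶜ → f ω = 0 :=
    (ae_restrict_iff' ht.compl).1 hfin.ae_eq_zero_compl
  filter_upwards [hAt, hft] with ω hωA hωf hω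
  exact hωf fun hωt => hωA ⟨hω, hωt⟩

variable {𝕜 : Type*} [RCLike 𝕜] {p : ℝ≥0∞}

def MulOpBoundedBy (p : ℝ≥0∞) (μ : Measure α) (V : α → 𝕜) (C : ℝ≥0) : Prop :=
  ∀ f : α → 𝕜, MemLp f p μ → eLpNorm (fun ω => V ω * f ω) p μ ≤ (C : ℝ≥0∞) * eLpNorm f p μ

theorem MulOpBoundedBy.measure_eq_zero {V : α → 𝕜} {C t : ℝ≥0} {B : Set α}
    (hC : MulOpBoundedBy p μ V C) (hp0 : p ≠ 0) (hptop : p ≠ ⊤) (hCt : C < t)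
    (hB : MeasurableSet B) (hBtop : μ B ≠ ⊤) (hVB : ∀ ω ∈ B, t ≤ ‖V ω‖₊) : μ B = 0 := by
  by_contra hB0
  have hpos : 0 < p.toReal := ENNReal.toReal_pos hp0 hptop
  have htC : (t : ℝ≥0∞) * μ B ^ (1 / p.toReal) ≤ C * μ B ^ (1 / p.toReal) := calc
    _ = eLpNorm (B.indicator fun _ => ((t : ℝ) : 𝕜)) p μ := by
      rw [eLpNorm_indicator_const hB hp0 hptop]; simp [enorm_eq_nnnorm]
    _ ≤ eLpNorm (fun ω => V ω * B.indicator (fun _ => (1 : 𝕜)) ω) p μ := by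
      refine eLpNorm_mono fun ω => ?_
      by_cases hω : ω ∈ B
      · simpa [hω] using NNReal.coe_le_coe.2 (hVB ω hω)
      · simp [hω]
    _ ≤ C * eLpNorm (B.indicator fun _ => (1 : 𝕜)) p μ :=
      hC _ (memLp_indicator_const p hB 1 (Or.inr hBtop))
    _ = C * μ B ^ (1 / p.toReal) := by rw [eLpNorm_indicator_const hB hp0 hptop]; simp
  rw [ENNReal.mul_le_mul_iff_left (by simp [hB0, hBtop, hpos]) (by simp [hB0, hBtop, hpos])]
    at htC
  exact hCt.not_ge (mod_cast htC)

theorem eLpNorm_top_le_of_mulOpBoundedBy (hsf : IsSemifinite μ) (hp0 : p ≠ 0) (hptop : p ≠ ⊤)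
    {V : α → 𝕜} (hV : Measurable V) {C : ℝ≥0} (hC : MulOpBoundedBy p μ V C) :
    eLpNorm V ⊤ μ ≤ C := by
  refine ENNReal.le_of_forall_pos_le_add fun ε hε _ => ?_
  have hnull : μ {ω | C + ε ≤ ‖V ω‖₊} = 0 :=
    isSemifinite_iff.1 hsf _ (measurableSet_le measurable_const hV.nnnorm)
      fun B hB hBm hBtop => hC.measure_eq_zero hp0 hptop (lt_add_of_pos_right C hε) hBm hBtop hB
  rw [eLpNorm_exponent_top]
  refine essSup_le_of_ae_le _ ?_
  filter_upwards [measure_eq_zero_iff_ae_notMem.1 hnull] with ω hω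
  simp only [not_le] at hω
  exact_mod_cast hω.le

theorem isSemifinite_of_forall_mulOpBoundedBy (hp0 : p ≠ 0) (hptop : p ≠ ⊤)
    (H : ∀ V : α → 𝕜, Measurable V → ∀ C : ℝ≥0, MulOpBoundedBy p μ V C → eLpNorm V ⊤ μ ≤ C) :
    IsSemifinite μ := by
  refine isSemifinite_iff.2 fun A hA hnull => ?_
  have hzero : MulOpBoundedBy p μ (A.indicator fun _ => (1 : 𝕜)) 0 := fun f hf => by
    have hAf : (fun ω => A.indicator (fun _ => (1 : 𝕜)) ω * f ω) =ᵐ[μ] 0 := by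
      filter_upwards [hf.ae_eq_zero_on_of_forall_finite_null hp0 hptop hA hnull] with ω hω
      by_cases hωA : ω ∈ A <;> simp [hωA, hω]
    simp [eLpNorm_congr_ae hAf]
  by_contra hA0
  have := H _ (measurable_const.indicator hA) 0 hzero
  rw [eLpNorm_exponent_top, eLpNormEssSup_indicator_const_eq A _ hA0] at this
  simp at this

end MeasureTheory

/-- A measure space `(Ω,Σ,μ)` is semi-finite (every set of infinite measure contains a
measurable subset of finite positive measure) if and only if every measurable
`V : Ω → 𝕜` whose multiplication operator `V(m)` on `L²(μ)` is bounded (with bound `C`)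
is essentially bounded with `‖V‖_{L∞(μ)} ≤ C`. -/
theorem semifinite_iff_multiplication_operator_bound {Ω : Type*} [MeasurableSpace Ω]
    {𝕜 : Type*} [RCLike 𝕜] (μ : Measure Ω) :
    (∀ A : Set Ω, MeasurableSet A → μ A = ⊤ →
        ∃ B : Set Ω, MeasurableSet B ∧ B ⊆ A ∧ 0 < μ B ∧ μ B < ⊤) ↔
      (∀ V : Ω → 𝕜, Measurable V → ∀ C : ℝ≥0,
        (∀ f : Ω → 𝕜, MemLp f 2 μ →
          eLpNorm (fun ω => V ω * f ω) 2 μ ≤ (C : ℝ≥0∞) * eLpNorm f 2 μ) →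
        eLpNorm V ⊤ μ ≤ (C : ℝ≥0∞)) :=
  ⟨fun hsf _ hV _ hC => eLpNorm_top_le_of_mulOpBoundedBy hsf two_ne_zero ofNat_ne_top hV hC,
    isSemifinite_of_forall_mulOpBoundedBy two_ne_zero ofNat_ne_top⟩
end

section
/- Let (Ω,Σ,μ) be a semi-finite measure space and V : Ω → 𝕂 measurable. Then the spectrum of the multiplication operator V(m) on L²(μ) equals the essential range of V, namely {λ ∈ 𝕂 : for all ε > 0, μ([|λ−V| < ε]) > 0}. -/
/-! If `‖λ - V‖ ≥ ε` almost everywhere, then `(λ - V)⁻¹` is essentially bounded by `ε⁻¹`, and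
multiplication by it is a bounded two-sided inverse of `λ - V(m)`. Conversely, if `S` is a
bounded inverse and `{‖λ - V‖ < ε}` has positive measure, semi-finiteness provides a subset `B`
of finite positive measure, and `f = 𝟙_B` satisfies `‖f‖ = ‖S ((λ - V) f)‖ ≤ ‖S‖ ε ‖f‖`, so
`‖S‖ ε ≥ 1`. -/

open MeasureTheory ENNReal NNReal

/-- `lam` belongs to the resolvent set of the (maximally defined) multiplication operator
`V(m)` on `L²(μ)` iff `lam - V(m)` possesses a bounded, everywhere defined two-sided
inverse `S`. -/
noncomputable def mulResolventSet {Ω : Type*} [MeasurableSpace Ω] {𝕜 : Type*} [RCLike 𝕜]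
    (μ : Measure Ω) (V : Ω → 𝕜) : Set 𝕜 :=
  {lam | ∃ S : Lp 𝕜 2 μ →L[𝕜] Lp 𝕜 2 μ,
    (∀ f : Lp 𝕜 2 μ, (fun ω => (lam - V ω) * (S f : Lp 𝕜 2 μ) ω) =ᵐ[μ] ⇑f) ∧
    (∀ f g : Lp 𝕜 2 μ, (⇑g =ᵐ[μ] fun ω => (lam - V ω) * f ω) → S g = f)}

namespace MeasureTheory

variable {Ω 𝕜 : Type*} [MeasurableSpace Ω] [RCLike 𝕜] {μ : Measure Ω}

lemma exists_measurableSet_subset_measure_pos_lt_top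
    (hsemifinite : ∀ A : Set Ω, MeasurableSet A → μ A = ⊤ →
      ∃ B : Set Ω, MeasurableSet B ∧ B ⊆ A ∧ 0 < μ B ∧ μ B < ⊤)
    {A : Set Ω} (hA : MeasurableSet A) (hpos : 0 < μ A) :
    ∃ B : Set Ω, MeasurableSet B ∧ B ⊆ A ∧ 0 < μ B ∧ μ B < ⊤ := by
  rcases eq_or_ne (μ A) ⊤ with htop | htop
  · exact hsemifinite A hA htop
  · exact ⟨A, hA, subset_rfl, hpos, htop.lt_top⟩

namespace Lp

variable {p : ℝ≥0∞} [Fact (1 ≤ p)]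

noncomputable def mulL (w : Lp 𝕜 ∞ μ) : Lp 𝕜 p μ →L[𝕜] Lp 𝕜 p μ :=
  (ContinuousLinearMap.mul 𝕜 𝕜).holderL μ ∞ p p w

lemma coeFn_mulL (w : Lp 𝕜 ∞ μ) (f : Lp 𝕜 p μ) :
    ⇑(mulL w f) =ᵐ[μ] fun ω => w ω * f ω :=
  (ContinuousLinearMap.mul 𝕜 𝕜).coeFn_holder w f

end Lp

section LeftInverse

variable {p : ℝ≥0∞} [Fact (1 ≤ p)] {W : Ω → 𝕜} {S : Lp 𝕜 p μ →L[𝕜] Lp 𝕜 p μ}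

lemma norm_le_opNorm_mul_mul_norm_of_ae_norm_mul_le
    (hS : ∀ f g : Lp 𝕜 p μ, (⇑g =ᵐ[μ] fun ω => W ω * f ω) → S g = f)
    (hW : AEStronglyMeasurable W μ) (f : Lp 𝕜 p μ) {c : ℝ}
    (hc : ∀ᵐ ω ∂μ, ‖W ω * f ω‖ ≤ c * ‖f ω‖) :
    ‖f‖ ≤ ‖S‖ * c * ‖f‖ := by
  have hWf : MemLp (fun ω => W ω * f ω) p μ :=
    (Lp.memLp f).of_le_mul (hW.mul (Lp.aestronglyMeasurable f)) hc
  have hbound : ‖hWf.toLp _‖ ≤ c * ‖f‖ := by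
    refine Lp.norm_le_mul_norm_of_ae_le_mul ?_
    filter_upwards [hWf.coeFn_toLp, hc] with ω hω hcω
    rwa [hω]
  calc ‖f‖ = ‖S (hWf.toLp _)‖ := by rw [hS f _ hWf.coeFn_toLp]
    _ ≤ ‖S‖ * ‖hWf.toLp _‖ := S.le_opNorm _
    _ ≤ ‖S‖ * c * ‖f‖ := by rw [mul_assoc]; gcongr

lemma one_le_opNorm_mul_of_measure_norm_lt_pos
    (hsemifinite : ∀ A : Set Ω, MeasurableSet A → μ A = ⊤ →
      ∃ B : Set Ω, MeasurableSet B ∧ B ⊆ A ∧ 0 < μ B ∧ μ B < ⊤)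
    (hW : Measurable W)
    (hS : ∀ f g : Lp 𝕜 p μ, (⇑g =ᵐ[μ] fun ω => W ω * f ω) → S g = f)
    {ε : ℝ} (hpos : 0 < μ {ω | ‖W ω‖ < ε}) :
    1 ≤ ‖S‖ * ε := by
  obtain ⟨B, hB, hBA, hB0, hBtop⟩ := exists_measurableSet_subset_measure_pos_lt_top hsemifinite
    (measurableSet_lt hW.norm measurable_const) hpos
  set f := indicatorConstLp p hB hBtop.ne (1 : 𝕜)
  have hf : 0 < ‖f‖ := by
    rw [norm_indicatorConstLp' (one_pos.trans_le Fact.out).ne' hB0.ne', norm_one, one_mul]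
    exact Real.rpow_pos_of_pos (ENNReal.toReal_pos hB0.ne' hBtop.ne) _
  have hc : ∀ᵐ ω ∂μ, ‖W ω * f ω‖ ≤ ε * ‖f ω‖ := by
    filter_upwards [(indicatorConstLp_coeFn : ⇑f =ᵐ[μ] _)] with ω hω
    rw [hω, norm_mul]
    by_cases hωB : ω ∈ B
    · gcongr
      exact (hBA hωB).le
    · simp [hωB]
  exact (le_mul_iff_one_le_left hf).mp
    (norm_le_opNorm_mul_mul_norm_of_ae_norm_mul_le hS hW.aestronglyMeasurable f hc)

end LeftInverse

end MeasureTheory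

section Resolvent

variable {Ω 𝕜 : Type*} [MeasurableSpace Ω] [RCLike 𝕜] {μ : Measure Ω} {V : Ω → 𝕜} {lam : 𝕜}

lemma mem_mulResolventSet_of_measure_norm_lt_eq_zero (hV : AEMeasurable V μ) {ε : ℝ}
    (hε : 0 < ε) (hnull : μ {ω | ‖lam - V ω‖ < ε} = 0) :
    lam ∈ mulResolventSet μ V := by
  have hbound : ∀ᵐ ω ∂μ, ε ≤ ‖lam - V ω‖ := by
    simpa only [ae_iff, not_le] using hnull
  have hne : ∀ᵐ ω ∂μ, lam - V ω ≠ 0 := by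
    filter_upwards [hbound] with ω hω h0
    rw [h0, norm_zero] at hω
    linarith
  have hw : MemLp (fun ω => (lam - V ω)⁻¹) ∞ μ := by
    refine memLp_top_of_bound (aemeasurable_const.sub hV).inv.aestronglyMeasurable ε⁻¹ ?_
    filter_upwards [hbound] with ω hω
    rw [norm_inv]
    exact inv_anti₀ hε hω
  refine ⟨Lp.mulL (hw.toLp _), fun f => ?_, fun f g hg => Lp.ext ?_⟩
  · filter_upwards [Lp.coeFn_mulL (hw.toLp _) f, hw.coeFn_toLp, hne] with ω h1 h2 h3
    rw [h1, h2, ← mul_assoc, mul_inv_cancel₀ h3, one_mul]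
  · filter_upwards [Lp.coeFn_mulL (hw.toLp _) g, hw.coeFn_toLp, hg, hne] with ω h1 h2 h3 h4
    rw [h1, h2, h3, ← mul_assoc, inv_mul_cancel₀ h4, one_mul]

lemma exists_measure_norm_lt_eq_zero_of_mem_mulResolventSet
    (hsemifinite : ∀ A : Set Ω, MeasurableSet A → μ A = ⊤ →
      ∃ B : Set Ω, MeasurableSet B ∧ B ⊆ A ∧ 0 < μ B ∧ μ B < ⊤)
    (hV : Measurable V) (h : lam ∈ mulResolventSet μ V) :
    ∃ ε > (0 : ℝ), μ {ω | ‖lam - V ω‖ < ε} = 0 := by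
  obtain ⟨S, -, hS⟩ := h
  refine ⟨(‖S‖ + 1)⁻¹, by positivity, ?_⟩
  by_contra hne
  have hle := one_le_opNorm_mul_of_measure_norm_lt_pos hsemifinite (measurable_const.sub hV)
    hS (pos_iff_ne_zero.mpr hne)
  have hlt : ‖S‖ * (‖S‖ + 1)⁻¹ < 1 := by
    rw [← div_eq_mul_inv, div_lt_one (by positivity)]
    linarith
  linarith

end Resolvent

/-- For a semi-finite measure space `(Ω,Σ,μ)` and a measurable `V : Ω → 𝕜`, the spectrum
of the multiplication operator `V(m)` on `L²(μ)` equals the essential range of `V`. -/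
theorem spectrum_multiplication_eq_essRange {Ω : Type*} [MeasurableSpace Ω]
    {𝕜 : Type*} [RCLike 𝕜] (μ : Measure Ω)
    (hsemifinite : ∀ A : Set Ω, MeasurableSet A → μ A = ⊤ →
      ∃ B : Set Ω, MeasurableSet B ∧ B ⊆ A ∧ 0 < μ B ∧ μ B < ⊤)
    (V : Ω → 𝕜) (hV : Measurable V) :
    (mulResolventSet μ V)ᶜ =
      {lam : 𝕜 | ∀ ε > (0 : ℝ), 0 < μ {ω | ‖lam - V ω‖ < ε}} := by
  ext lam
  simp only [Set.mem_compl_iff, Set.mem_ofPred_eq]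
  constructor
  · intro h ε hε
    exact pos_iff_ne_zero.mpr fun hnull =>
      h (mem_mulResolventSet_of_measure_norm_lt_eq_zero hV.aemeasurable hε hnull)
  · intro h hmem
    obtain ⟨ε, hε, hnull⟩ :=
      exists_measure_norm_lt_eq_zero_of_mem_mulResolventSet hsemifinite hV hmem
    exact (h ε hε).ne' hnull
end

section
/- Let H be a Hilbert space, N₀, N₁ ∈ L(H) with N₀ selfadjoint. Assume there exist c₀, c₁ > 0 such that ⟨x, N₀x⟩ ≥ c₀‖x‖² for all x ∈ ran(N₀) and Re⟨y, N₁y⟩ ≥ c₁‖y‖² for all y ∈ ker(N₀). Then for all 0 < c₁' < c₁ there exists ν₀ > 0 such that for all ν ≥ ν₀ and all z ∈ H one has ν⟨z, N₀z⟩ + Re⟨z, N₁z⟩ ≥ c₁'‖z‖². -/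
/-!
Since `N₀` is selfadjoint, `H = ker N₀ ⊕ (ker N₀)ᗮ` with `(ker N₀)ᗮ` the closure of `ran N₀`, so the
coercivity of `N₀` on its range extends to `(ker N₀)ᗮ`. Writing `z = y + x` accordingly,
`⟨z, N₀z⟩ = ⟨x, N₀x⟩ ≥ c₀‖x‖²`, while `Re⟨z, N₁z⟩ ≥ c₁‖y‖² - ‖N₁‖‖x‖(‖x‖ + 2‖y‖)`. Young's inequality
with weight `ε = c₁ - c₁'` turns the cross term into `ε‖y‖² + (‖N₁‖²/ε)‖x‖²`, and every `‖x‖²` term is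
absorbed by `νc₀‖x‖²` once `ν` is large.
-/

open RCLike

theorem two_mul_mul_le_mul_sq_add_div_mul_sq {ε : ℝ} (hε : 0 < ε) (M a b : ℝ) :
    2 * M * a * b ≤ ε * b ^ 2 + M ^ 2 / ε * a ^ 2 := by
  have key : ε * (ε * b ^ 2 + M ^ 2 / ε * a ^ 2 - 2 * M * a * b) = (ε * b - M * a) ^ 2 := by
    field_simp; ring
  nlinarith [sq_nonneg (ε * b - M * a)]

section

variable {𝕜 E : Type*} [RCLike 𝕜] [NormedAddCommGroup E] [InnerProductSpace 𝕜 E]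

theorem le_re_inner_map_self_of_mem_topologicalClosure (T : E →L[𝕜] E) {S : Submodule 𝕜 E}
    {c : ℝ} (hS : ∀ x ∈ S, c * ‖x‖ ^ 2 ≤ re (inner 𝕜 x (T x))) {x : E}
    (hx : x ∈ S.topologicalClosure) : c * ‖x‖ ^ 2 ≤ re (inner 𝕜 x (T x)) := by
  have hclosed : IsClosed {u : E | c * ‖u‖ ^ 2 ≤ re (inner 𝕜 u (T u))} :=
    isClosed_le (by fun_prop) (continuous_re.comp (continuous_id.inner T.continuous))
  exact closure_minimal hS hclosed hx

theorem LinearMap.IsSymmetric.orthogonal_ker [CompleteSpace E] {T : E →ₗ[𝕜] E}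
    (hT : T.IsSymmetric) : (LinearMap.ker T)ᗮ = (LinearMap.range T).topologicalClosure := by
  rw [← hT.orthogonal_range, Submodule.orthogonal_orthogonal_eq_closure]

theorem LinearMap.IsSymmetric.inner_add_map_add_of_map_eq_zero {T : E →ₗ[𝕜] E}
    (hT : T.IsSymmetric) {y : E} (hy : T y = 0) (x : E) :
    inner 𝕜 (y + x) (T (y + x)) = inner 𝕜 x (T x) := by
  rw [map_add, hy, zero_add, inner_add_left, ← hT y x, hy, inner_zero_left, zero_add]

theorem ContinuousLinearMap.re_inner_map_self_sub_le_re_inner_add_map_add (T : E →L[𝕜] E)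
    (y x : E) :
    re (inner 𝕜 y (T y)) - ‖T‖ * ‖x‖ * (‖x‖ + 2 * ‖y‖) ≤ re (inner 𝕜 (y + x) (T (y + x))) := by
  have bound : ∀ a b : E, |re (inner 𝕜 a (T b))| ≤ ‖T‖ * ‖a‖ * ‖b‖ := fun a b =>
    calc |re (inner 𝕜 a (T b))| ≤ ‖a‖ * ‖T b‖ := (abs_re_le_norm _).trans (norm_inner_le_norm _ _)
      _ ≤ ‖T‖ * ‖a‖ * ‖b‖ := by
        rw [mul_comm ‖T‖, mul_assoc]; gcongr; exact T.le_opNorm b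
  have split : re (inner 𝕜 (y + x) (T (y + x))) =
      re (inner 𝕜 y (T y)) + re (inner 𝕜 y (T x)) + re (inner 𝕜 x (T (y + x))) := by
    simp only [map_add, inner_add_left, inner_add_right]; ring
  have h₁ := abs_le.mp (bound y x)
  have h₂ := abs_le.mp (bound x (y + x))
  have h₃ : ‖T‖ * ‖x‖ * ‖y + x‖ ≤ ‖T‖ * ‖x‖ * (‖y‖ + ‖x‖) := by gcongr; exact norm_add_le y x
  rw [split]; linarith

end

theorem shifted_positivity_general {𝕜 H : Type*} [RCLike 𝕜] [NormedAddCommGroup H]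
    [InnerProductSpace 𝕜 H] [CompleteSpace H] (N₀ N₁ : H →L[𝕜] H)
    (hsa : IsSelfAdjoint N₀) (c₀ c₁ : ℝ) (hc₀ : 0 < c₀)
    (hran : ∀ x ∈ LinearMap.range (N₀ : H →ₗ[𝕜] H), c₀ * ‖x‖ ^ 2 ≤ RCLike.re (inner 𝕜 x (N₀ x) : 𝕜))
    (hker : ∀ y ∈ LinearMap.ker (N₀ : H →ₗ[𝕜] H), c₁ * ‖y‖ ^ 2 ≤ RCLike.re (inner 𝕜 y (N₁ y) : 𝕜)) :
    ∀ c₁' : ℝ, 0 < c₁' → c₁' < c₁ → ∃ ν₀ : ℝ, 0 < ν₀ ∧ ∀ ν : ℝ, ν₀ ≤ ν → ∀ z : H,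
      c₁' * ‖z‖ ^ 2 ≤
        ν * RCLike.re (inner 𝕜 z (N₀ z) : 𝕜) + RCLike.re (inner 𝕜 z (N₁ z) : 𝕜) := by
  intro c₁' hc₁' hlt
  set ε := c₁ - c₁'
  set M := ‖N₁‖
  have hε : 0 < ε := sub_pos.mpr hlt
  refine ⟨(c₁' + M + M ^ 2 / ε) / c₀, by positivity, fun ν hν z => ?_⟩
  have hνc₀ : c₁' + M + M ^ 2 / ε ≤ ν * c₀ := (div_le_iff₀ hc₀).mp hν
  have hν : 0 ≤ ν := le_trans (by positivity) hν
  set K := LinearMap.ker (N₀ : H →ₗ[𝕜] H)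
  have : CompleteSpace K := N₀.isClosed_ker.completeSpace_coe
  obtain ⟨y, hy, x, hx, rfl⟩ := K.exists_add_mem_mem_orthogonal z
  have hnorm : ‖y + x‖ ^ 2 = ‖y‖ ^ 2 + ‖x‖ ^ 2 := by
    simpa only [sq] using norm_add_sq_eq_norm_sq_add_norm_sq_of_inner_eq_zero y x
      (K.inner_right_of_mem_orthogonal hy hx)
  have hN₀ : c₀ * ‖x‖ ^ 2 ≤ re (inner 𝕜 (y + x) (N₀ (y + x))) := by
    rw [← ContinuousLinearMap.coe_coe N₀, hsa.isSymmetric.inner_add_map_add_of_map_eq_zero hy]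
    exact le_re_inner_map_self_of_mem_topologicalClosure N₀ hran
      (hsa.isSymmetric.orthogonal_ker ▸ hx)
  have hN₁ := N₁.re_inner_map_self_sub_le_re_inner_add_map_add y x
  have hyoung := two_mul_mul_le_mul_sq_add_div_mul_sq hε M ‖x‖ ‖y‖
  rw [hnorm]
  linarith [hker y hy, mul_le_mul_of_nonneg_left hN₀ hν,
    mul_le_mul_of_nonneg_right hνc₀ (sq_nonneg ‖x‖)]

/-- Let `N₀, N₁` be bounded operators on a Hilbert space `H` with `N₀` selfadjoint,
`⟨x, N₀x⟩ ≥ c₀‖x‖²` on `ran N₀` and `Re⟨y, N₁y⟩ ≥ c₁‖y‖²` on `ker N₀`. Then for every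
`0 < c₁' < c₁` there is `ν₀ > 0` such that for all `ν ≥ ν₀` and all `z`:
`ν⟨z, N₀z⟩ + Re⟨z, N₁z⟩ ≥ c₁'‖z‖²`. -/
theorem shifted_positivity {𝕜 H : Type*} [RCLike 𝕜] [NormedAddCommGroup H]
    [InnerProductSpace 𝕜 H] [CompleteSpace H] (N₀ N₁ : H →L[𝕜] H)
    (hsa : IsSelfAdjoint N₀) (c₀ c₁ : ℝ) (hc₀ : 0 < c₀) (hc₁ : 0 < c₁)
    (hran : ∀ x ∈ LinearMap.range (N₀ : H →ₗ[𝕜] H), c₀ * ‖x‖ ^ 2 ≤ RCLike.re (inner 𝕜 x (N₀ x) : 𝕜))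
    (hker : ∀ y ∈ LinearMap.ker (N₀ : H →ₗ[𝕜] H), c₁ * ‖y‖ ^ 2 ≤ RCLike.re (inner 𝕜 y (N₁ y) : 𝕜)) :
    ∀ c₁' : ℝ, 0 < c₁' → c₁' < c₁ → ∃ ν₀ : ℝ, 0 < ν₀ ∧ ∀ ν : ℝ, ν₀ ≤ ν → ∀ z : H,
      c₁' * ‖z‖ ^ 2 ≤
        ν * RCLike.re (inner 𝕜 z (N₀ z) : 𝕜) + RCLike.re (inner 𝕜 z (N₁ z) : 𝕜) :=
  shifted_positivity_general N₀ N₁ hsa c₀ c₁ hc₀ hran hker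
end

section
/- Let z ∈ ℂ with Re z ≥ ν > 0 and α ∈ [0,1]. Then Re(z^α) ≥ (Re z)^α ≥ ν^α, where z^α is the principal branch of the fractional power (with argument in (−π, π)). -/
open Real Complex

/-- Weighted AM–GM bounds `cos θ ^ α` by `α cos θ + (1 - α)`, which concavity of `cos` on
`[-π/2, π/2]` (interpolating between `θ` and `0`) bounds by `cos (θ α)`. -/
theorem Real.cos_rpow_le_cos_mul {θ α : ℝ} (hθ : |θ| ≤ π / 2) (hα₀ : 0 ≤ α) (hα₁ : α ≤ 1) :
    cos θ ^ α ≤ cos (θ * α) := by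
  have hθmem : θ ∈ Set.Icc (-(π / 2)) (π / 2) := abs_le.1 hθ
  have hcos : 0 ≤ cos θ := cos_nonneg_of_mem_Icc hθmem
  have hzero : (0 : ℝ) ∈ Set.Icc (-(π / 2)) (π / 2) := ⟨by linarith [pi_pos], by linarith [pi_pos]⟩
  calc cos θ ^ α = cos θ ^ α * 1 ^ (1 - α) := by rw [one_rpow, mul_one]
    _ ≤ α * cos θ + (1 - α) * 1 :=
      geom_mean_le_arith_mean2_weighted hα₀ (sub_nonneg.2 hα₁) hcos zero_le_one (by ring)
    _ = α • cos θ + (1 - α) • cos 0 := by rw [cos_zero, smul_eq_mul, smul_eq_mul]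
    _ ≤ cos (α • θ + (1 - α) • 0) :=
      strictConcaveOn_cos_Icc.concaveOn.2 hθmem hzero hα₀ (sub_nonneg.2 hα₁) (by ring)
    _ = cos (θ * α) := by rw [smul_eq_mul, smul_zero, add_zero, mul_comm]

theorem Complex.re_rpow_le_re_cpow {z : ℂ} (hz : 0 ≤ z.re) {α : ℝ} (hα₀ : 0 ≤ α) (hα₁ : α ≤ 1) :
    z.re ^ α ≤ (z ^ (α : ℂ)).re := by
  have hcos : 0 ≤ Real.cos (arg z) :=
    cos_nonneg_of_mem_Icc (abs_le.1 (abs_arg_le_pi_div_two_iff.2 hz))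
  calc z.re ^ α = ‖z‖ ^ α * Real.cos (arg z) ^ α := by
        rw [← norm_mul_cos_arg, mul_rpow (norm_nonneg z) hcos]
    _ ≤ ‖z‖ ^ α * Real.cos (arg z * α) :=
      mul_le_mul_of_nonneg_left
        (Real.cos_rpow_le_cos_mul (abs_arg_le_pi_div_two_iff.2 hz) hα₀ hα₁)
        (rpow_nonneg (norm_nonneg z) α)
    _ = (z ^ (α : ℂ)).re := (cpow_ofReal_re z α).symm

/-- For `z ∈ ℂ` with `Re z ≥ ν > 0` and `α ∈ [0,1]`:
`Re(z^α) ≥ (Re z)^α ≥ ν^α`, where `z^α` is the principal branch of the fractional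
power. -/
theorem re_cpow_ge_rpow (ν : ℝ) (hν : 0 < ν) (z : ℂ) (hz : ν ≤ z.re) (α : ℝ)
    (hα : α ∈ Set.Icc (0 : ℝ) 1) :
    z.re ^ α ≤ (z ^ (α : ℂ)).re ∧ ν ^ α ≤ z.re ^ α :=
  ⟨re_rpow_le_re_cpow (hν.le.trans hz) hα.1 hα.2, rpow_le_rpow hν.le hz hα.1⟩
end

section
/- Let M₀, M₁ ∈ ℂ^{n×n} with the matrix pair (M₀,M₁) regular, i.e., det(zM₀+M₁) is not identically zero. Then there exist invertible P, Q ∈ ℂ^{n×n}, k ∈ {0,…,n}, C ∈ ℂ^{k×k}, and a nilpotent N ∈ ℂ^{(n−k)×(n−k)} such that P M₀ Q = diag(1_k, N) and P M₁ Q = diag(C, 1_{n−k}) (quasi-Weierstraß normal form). -/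
/-!
Choose `z` with `A = z • M₀ + M₁` invertible and put `T = A⁻¹ * M₀`, so that
`A⁻¹ * M₁ = 1 - z • T`. The Fitting decomposition of `T` (kernel and range of a high power of
`T`) conjugates `T` to `diag(B, N)` with `B` invertible and `N` nilpotent, hence `1 - z • T` to
`diag(1 - z • B, 1 - z • N)`, whose second block is invertible. Multiplying on the left by
`diag(B⁻¹, (1 - z • N)⁻¹)` turns the two matrices into `diag(1, (1 - z • N)⁻¹ * N)` and
`diag(B⁻¹ * (1 - z • B), 1)`, and `(1 - z • N)⁻¹ * N` is nilpotent since `N` commutes with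
`1 - z • N`.
-/

section FinBlockDiag

open Matrix

variable {R : Type*} {n k : ℕ}

def finBlockDiag [Zero R] (hk : k ≤ n) (A : Matrix (Fin k) (Fin k) R)
    (B : Matrix (Fin (n - k)) (Fin (n - k)) R) : Matrix (Fin n) (Fin n) R :=
  reindex (finSumFinEquiv.trans (finCongr (Nat.add_sub_cancel' hk)))
    (finSumFinEquiv.trans (finCongr (Nat.add_sub_cancel' hk))) (fromBlocks A 0 0 B)

variable (hk : k ≤ n)

theorem finBlockDiag_mul_finBlockDiag [NonUnitalNonAssocSemiring R]
    (A A' : Matrix (Fin k) (Fin k) R) (B B' : Matrix (Fin (n - k)) (Fin (n - k)) R) :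
    finBlockDiag hk A B * finBlockDiag hk A' B' = finBlockDiag hk (A * A') (B * B') := by
  rw [finBlockDiag, finBlockDiag, finBlockDiag, reindex_apply, reindex_apply, reindex_apply,
    submatrix_mul_equiv, fromBlocks_multiply]
  simp only [Matrix.mul_zero, Matrix.zero_mul, add_zero, zero_add]

@[simp]
theorem finBlockDiag_one [Zero R] [One R] :
    finBlockDiag hk (1 : Matrix (Fin k) (Fin k) R) 1 = 1 := by
  rw [finBlockDiag, fromBlocks_one, reindex_apply, submatrix_one_equiv]

theorem one_sub_smul_finBlockDiag [Ring R] (z : R) (A : Matrix (Fin k) (Fin k) R)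
    (B : Matrix (Fin (n - k)) (Fin (n - k)) R) :
    1 - z • finBlockDiag hk A B = finBlockDiag hk (1 - z • A) (1 - z • B) := by
  rw [← finBlockDiag_one hk]
  simp only [finBlockDiag, ← coe_reindexLinearEquiv R, ← map_smul, ← map_sub]
  rw [fromBlocks_smul, sub_eq_add_neg, fromBlocks_neg, fromBlocks_add]
  simp [sub_eq_add_neg]

theorem isUnit_finBlockDiag [Semiring R] {A : Matrix (Fin k) (Fin k) R}
    {B : Matrix (Fin (n - k)) (Fin (n - k)) R} (hA : IsUnit A) (hB : IsUnit B) :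
    IsUnit (finBlockDiag hk A B) := by
  obtain ⟨a, rfl⟩ := hA
  obtain ⟨b, rfl⟩ := hB
  exact ⟨⟨finBlockDiag hk a b, finBlockDiag hk ↑a⁻¹ ↑b⁻¹,
    by rw [finBlockDiag_mul_finBlockDiag]; simp,
    by rw [finBlockDiag_mul_finBlockDiag]; simp⟩, rfl⟩

end FinBlockDiag

section Fitting

open Module LinearMap

theorem Module.End.exists_isCompl_isUnit_restrict_isNilpotent_restrict {R M : Type*} [Ring R]
    [AddCommGroup M] [Module R M] [IsArtinian R M] [IsNoetherian R M] (f : End R M) :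
    ∃ (p q : Submodule R M) (hp : ∀ x ∈ p, f x ∈ p) (hq : ∀ x ∈ q, f x ∈ q),
      IsCompl p q ∧ IsUnit (f.restrict hp) ∧ IsNilpotent (f.restrict hq) := by
  obtain ⟨m, hcompl, hm⟩ :=
    (f.eventually_isCompl_ker_pow_range_pow.and (Filter.eventually_ge_atTop 1)).exists
  have hcomm : f * f ^ m = f ^ m * f := (pow_mul_comm' f m).symm
  have hp : ∀ x ∈ range (f ^ m), f x ∈ range (f ^ m) := by
    rintro _ ⟨y, rfl⟩
    exact ⟨f y, by rw [← mul_apply, ← hcomm, mul_apply]⟩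
  have hq : ∀ x ∈ ker (f ^ m), f x ∈ ker (f ^ m) := by
    intro x hx
    rw [mem_ker] at hx ⊢
    rw [← mul_apply, ← hcomm, mul_apply, hx, map_zero]
  refine ⟨_, _, hp, hq, hcompl.symm, ?_, m, ?_⟩
  · -- an element of `ker f` lies in `ker (f ^ m)`, which meets `range (f ^ m)` trivially
    refine (End.isUnit_iff _).mpr (IsArtinian.bijective_of_injective_endomorphism _ ?_)
    rw [← ker_eq_bot, eq_bot_iff]
    intro x hx
    have hxq : (x : M) ∈ ker (f ^ m) := by
      simpa using f.iterateKer.monotone hm (congrArg Subtype.val (mem_ker.mp hx))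
    exact (Submodule.mem_bot R).mpr
      (Subtype.ext (Submodule.disjoint_def.mp hcompl.disjoint _ hxq x.2))
  · ext x
    rw [End.pow_restrict _ hq]
    exact mem_ker.mp x.2

theorem LinearMap.toMatrix_reindex {R M₁ M₂ ι₁ ι₂ κ₁ κ₂ : Type*} [CommSemiring R]
    [AddCommMonoid M₁] [AddCommMonoid M₂] [Module R M₁] [Module R M₂]
    [Fintype ι₁] [DecidableEq ι₁] [Fintype ι₂] [DecidableEq ι₂] [Finite κ₁] [Finite κ₂]
    (b₁ : Basis ι₁ R M₁) (b₂ : Basis κ₁ R M₂) (e₁ : ι₁ ≃ ι₂) (e₂ : κ₁ ≃ κ₂)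
    (f : M₁ →ₗ[R] M₂) :
    toMatrix (b₁.reindex e₁) (b₂.reindex e₂) f = Matrix.reindex e₂ e₁ (toMatrix b₁ b₂ f) := by
  ext i j
  simp [toMatrix_apply, Basis.reindex_apply]

theorem LinearMap.toMatrix_prodEquivOfIsCompl {R M ι κ : Type*} [CommRing R] [AddCommGroup M]
    [Module R M] [Fintype ι] [Fintype κ] [DecidableEq ι] [DecidableEq κ]
    {p q : Submodule R M} (h : IsCompl p q) (bp : Basis ι R p) (bq : Basis κ R q)
    (f : End R M) (hp : ∀ x ∈ p, f x ∈ p) (hq : ∀ x ∈ q, f x ∈ q) :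
    toMatrix ((bp.prod bq).map (p.prodEquivOfIsCompl q h))
        ((bp.prod bq).map (p.prodEquivOfIsCompl q h)) f =
      Matrix.fromBlocks (toMatrix bp bp (f.restrict hp)) 0 0
        (toMatrix bq bq (f.restrict hq)) := by
  have hconj :
      (f.restrict hp).prodMap (f.restrict hq) = (p.prodEquivOfIsCompl q h).symm.conj f := by
    refine LinearMap.ext fun ⟨x, y⟩ => ?_
    simp only [LinearEquiv.conj_apply, LinearMap.comp_apply, LinearEquiv.coe_coe,
      LinearEquiv.symm_symm]
    rw [eq_comm, LinearEquiv.symm_apply_eq]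
    simp [Submodule.coe_prodEquivOfIsCompl']
  rw [← toMatrix_prodMap, hconj]
  ext i j
  simp [toMatrix_apply, Basis.map_apply, LinearEquiv.conj_apply]

theorem Module.End.exists_basis_toMatrix_eq_finBlockDiag {K V : Type*} [Field K]
    [AddCommGroup V] [Module K V] [FiniteDimensional K V] {n : ℕ} (hn : finrank K V = n)
    (f : End K V) :
    ∃ (k : ℕ) (hk : k ≤ n) (b : Basis (Fin n) K V) (B : Matrix (Fin k) (Fin k) K)
      (N : Matrix (Fin (n - k)) (Fin (n - k)) K),
      IsUnit B ∧ IsNilpotent N ∧ toMatrix b b f = finBlockDiag hk B N := by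
  obtain ⟨p, q, hp, hq, hpq, hunit, hnil⟩ :=
    f.exists_isCompl_isUnit_restrict_isNilpotent_restrict
  have hdim : finrank K p + finrank K q = n := hn ▸ Submodule.finrank_add_eq_of_isCompl hpq
  have hk : finrank K p ≤ n := by omega
  let bp := finBasis K p
  let bq := (finBasis K q).reindex (finCongr (by omega : finrank K q = n - finrank K p))
  refine ⟨_, hk, ((bp.prod bq).map (p.prodEquivOfIsCompl q hpq)).reindex
      (finSumFinEquiv.trans (finCongr (Nat.add_sub_cancel' hk))),
    toMatrix bp bp (f.restrict hp), toMatrix bq bq (f.restrict hq),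
    (isUnit_toMatrix_iff _).mpr hunit, hnil.map (toMatrixAlgEquiv bq), ?_⟩
  rw [toMatrix_reindex, toMatrix_prodEquivOfIsCompl]
  rfl

theorem Matrix.exists_mul_eq_mul_finBlockDiag {K : Type*} [Field K] {n : ℕ}
    (T : Matrix (Fin n) (Fin n) K) :
    ∃ (k : ℕ) (hk : k ≤ n) (S : Matrix (Fin n) (Fin n) K) (B : Matrix (Fin k) (Fin k) K)
      (N : Matrix (Fin (n - k)) (Fin (n - k)) K),
      IsUnit S ∧ IsUnit B ∧ IsNilpotent N ∧ T * S = S * finBlockDiag hk B N := by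
  obtain ⟨k, hk, b, B, N, hB, hN, hb⟩ :=
    Module.End.exists_basis_toMatrix_eq_finBlockDiag (finrank_fin_fun K) (toLin' T)
  let std := Pi.basisFun K (Fin n)
  have : Invertible (std.toMatrix b) := std.invertibleToMatrix b
  refine ⟨k, hk, std.toMatrix b, B, N, isUnit_of_invertible _, hB, hN, ?_⟩
  have hT : toMatrix std std (toLin' T) = T := by
    rw [LinearMap.toMatrix_eq_toMatrix', LinearMap.toMatrix'_toLin']
  conv_lhs => rw [← hT]
  rw [← hb, basis_toMatrix_mul_linearMap_toMatrix, linearMap_toMatrix_mul_basis_toMatrix]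

end Fitting

theorem Matrix.isNilpotent_nonsing_inv_one_sub_smul_mul {m R : Type*} [Fintype m] [DecidableEq m]
    [CommRing R] {N : Matrix m m R} (hN : IsNilpotent N) (z : R) :
    IsNilpotent ((1 - z • N)⁻¹ * N) := by
  have hu : IsUnit (1 - z • N) := (hN.smul z).isUnit_one_sub
  have hcomm : Commute (↑hu.unit⁻¹ : Matrix m m R) N :=
    ((Commute.one_left N).sub_left ((Commute.refl N).smul_left z)).units_inv_left
  rw [Matrix.coe_units_inv, IsUnit.unit_spec] at hcomm
  exact hcomm.isNilpotent_mul_left hN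

/-- Quasi-Weierstraß normal form: for a regular matrix pair `(M₀, M₁)` (i.e.
`det(zM₀+M₁)` is not identically zero) there exist invertible `P, Q`, a number
`k ∈ {0,…,n}`, a matrix `C ∈ ℂ^{k×k}` and a nilpotent `N ∈ ℂ^{(n−k)×(n−k)}` such that
`P M₀ Q = diag(1, N)` and `P M₁ Q = diag(C, 1)` in block form. -/
theorem quasi_weierstrass_normal_form (n : ℕ) (M₀ M₁ : Matrix (Fin n) (Fin n) ℂ)
    (hreg : ∃ z : ℂ, (z • M₀ + M₁).det ≠ 0) :
    ∃ (k : ℕ) (hk : k ≤ n) (P Q : Matrix (Fin n) (Fin n) ℂ)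
      (C : Matrix (Fin k) (Fin k) ℂ) (N : Matrix (Fin (n - k)) (Fin (n - k)) ℂ),
      IsUnit P ∧ IsUnit Q ∧ IsNilpotent N ∧
      P * M₀ * Q = Matrix.reindex (finSumFinEquiv.trans (finCongr (Nat.add_sub_cancel' hk)))
        (finSumFinEquiv.trans (finCongr (Nat.add_sub_cancel' hk)))
        (Matrix.fromBlocks 1 0 0 N) ∧
      P * M₁ * Q = Matrix.reindex (finSumFinEquiv.trans (finCongr (Nat.add_sub_cancel' hk)))
        (finSumFinEquiv.trans (finCongr (Nat.add_sub_cancel' hk)))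
        (Matrix.fromBlocks C 0 0 1) := by
  obtain ⟨z, hz⟩ := hreg
  set A := z • M₀ + M₁
  obtain ⟨k, hk, S, B, N, hS, hB, hN, hM₀⟩ := Matrix.exists_mul_eq_mul_finBlockDiag (A⁻¹ * M₀)
  have hM₁ : A⁻¹ * M₁ * S = S * finBlockDiag hk (1 - z • B) (1 - z • N) := by
    have hAM₁ : A⁻¹ * M₁ = 1 - z • (A⁻¹ * M₀) := by
      rw [eq_sub_iff_add_eq, ← Matrix.mul_smul, ← Matrix.mul_add, add_comm,
        Matrix.nonsing_inv_mul _ hz.isUnit]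
    rw [← one_sub_smul_finBlockDiag, hAM₁, Matrix.sub_mul, Matrix.smul_mul, hM₀,
      Matrix.mul_sub, Matrix.mul_smul, one_mul, mul_one]
  have hu : IsUnit (1 - z • N) := (hN.smul z).isUnit_one_sub
  set E := finBlockDiag hk B⁻¹ (1 - z • N)⁻¹
  have hconj (M : Matrix (Fin n) (Fin n) ℂ) :
      E * S⁻¹ * A⁻¹ * M * S = E * (S⁻¹ * (A⁻¹ * M * S)) := by
    simp only [Matrix.mul_assoc]
  have hSdet := S.isUnit_iff_isUnit_det.mp hS
  refine ⟨k, hk, E * S⁻¹ * A⁻¹, S, B⁻¹ * (1 - z • B), (1 - z • N)⁻¹ * N, ?_, hS,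
    Matrix.isNilpotent_nonsing_inv_one_sub_smul_mul hN z, ?_, ?_⟩
  · simp only [E, IsUnit.mul_iff, Matrix.isUnit_nonsing_inv_iff]
    exact ⟨⟨isUnit_finBlockDiag hk (Matrix.isUnit_nonsing_inv_iff.mpr hB)
      (Matrix.isUnit_nonsing_inv_iff.mpr hu), hS⟩, A.isUnit_iff_isUnit_det.mpr hz.isUnit⟩
  · rw [hconj, hM₀, Matrix.nonsing_inv_mul_cancel_left _ _ hSdet,
      finBlockDiag_mul_finBlockDiag, Matrix.nonsing_inv_mul _ (B.isUnit_iff_isUnit_det.mp hB)]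
    rfl
  · rw [hconj, hM₁, Matrix.nonsing_inv_mul_cancel_left _ _ hSdet,
      finBlockDiag_mul_finBlockDiag,
      Matrix.nonsing_inv_mul _ ((1 - z • N).isUnit_iff_isUnit_det.mp hu)]
    rfl
end
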